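/- Suppose f : X → Y is a smooth Fredholm map between Banach spaces with f(0) = 0, and Q ⊂ X is a smooth finite-dimensional submanifold of X that contains 0, is contained in f⁻¹(0), and satisfies dim ker df(0) = dim Q. Then Q contains a neighborhood of 0 in f⁻¹(0); in particular this neighborhood is a smooth manifold of dimension dim ker df(0). -/

import Mathlib

open Module

/-- A continuous linear operator between Banach spaces is Fredholm if it has
finite-dimensional kernel, closed range, and finite-dimensional cokernel. -/
def IsFredholmOperator {X Y : Type*} [NormedAddCommGroup X] [NormedSpace ℝ X]
    [NormedAddCommGroup Y] [NormedSpace ℝ Y] (T : X →L[ℝ] Y) : Prop :=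
  FiniteDimensional ℝ (LinearMap.ker (T : X →ₗ[ℝ] Y)) ∧ IsClosed (LinearMap.range (T : X →ₗ[ℝ] Y) : Set Y) ∧
    FiniteDimensional ℝ (Y ⧸ LinearMap.range (T : X →ₗ[ℝ] Y))

/-- If `f : X → Y` is a smooth Fredholm map between Banach spaces with `f 0 = 0`, and
`Q = range q ⊆ X` is a smooth finite-dimensional submanifold (parametrized by a smooth
injective immersion `q : F → X` which is a topological embedding onto its image) with
`0 ∈ Q`, `Q ⊆ f⁻¹(0)` and `dim ker df(0) = dim Q`, then `Q` contains a neighborhood of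
`0` in `f⁻¹(0)`. -/
theorem submanifold_contains_nbhd_of_zero_set {X Y F : Type*}
    [NormedAddCommGroup X] [NormedSpace ℝ X] [CompleteSpace X]
    [NormedAddCommGroup Y] [NormedSpace ℝ Y] [CompleteSpace Y]
    [NormedAddCommGroup F] [NormedSpace ℝ F] [FiniteDimensional ℝ F]
    (f : X → Y) (hf : ContDiff ℝ (⊤ : ℕ∞) f) (hf0 : f 0 = 0)
    (hFred : ∀ x : X, IsFredholmOperator (fderiv ℝ f x))
    (q : F → X) (hq : ContDiff ℝ (⊤ : ℕ∞) q) (hq0 : q 0 = 0)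
    (hqemb : Topology.IsEmbedding q)
    (hqimm : ∀ x : F, Function.Injective (fderiv ℝ q x))
    (hQzero : Set.range q ⊆ f ⁻¹' {0})
    (hdim : finrank ℝ (LinearMap.ker (fderiv ℝ f 0 : X →ₗ[ℝ] Y)) = finrank ℝ F) :
    ∃ U ∈ nhds (0 : X), U ∩ f ⁻¹' {0} ⊆ Set.range q := by
  classical
  obtain ⟨hker_fd, hcl, hcoker⟩ := hFred 0
  set T := fderiv ℝ f 0 with hTdef
  haveI : FiniteDimensional ℝ (T.ker) := hker_fd
  haveI : FiniteDimensional ℝ (Y ⧸ T.range) := hcoker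
  haveI : CompleteSpace (T.range) := hcl.completeSpace_coe
  obtain ⟨πK, hπK⟩ := Submodule.ClosedComplemented.of_finiteDimensional
    (T.ker)
  obtain ⟨P, hP⟩ := Submodule.ClosedComplemented.of_quotient_finiteDimensional hcl
  -- the candidate linear isomorphism X ≃ range T × ker T
  set D : X →L[ℝ] (T.range × T.ker) := (P.comp T).prod πK with hDdef
  have hDinj : D.ker = ⊥ := by
    rw [LinearMap.ker_eq_bot']
    intro x hx
    have h1 : P (T x) = 0 := congrArg Prod.fst hx
    have h2 : πK x = 0 := congrArg Prod.snd hx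
    have hTx : T x = 0 := by
      have := hP ⟨T x, LinearMap.mem_range_self _ x⟩
      rw [Submodule.coe_mk] at this
      rw [this] at h1
      exact congrArg Subtype.val h1
    have hxK : x ∈ T.ker := hTx
    have := hπK ⟨x, hxK⟩
    rw [Submodule.coe_mk] at this
    rw [this] at h2
    exact congrArg Subtype.val h2
  have hDsurj : D.range = ⊤ := by
    rw [LinearMap.range_eq_top]
    rintro ⟨⟨y, x₀, hx₀⟩, k⟩
    refine ⟨x₀ - (πK x₀ : X) + (k : X), ?_⟩
    have hk1 : T (k : X) = 0 := k.2
    have hk2 : T ((πK x₀ : X)) = 0 := (πK x₀).2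
    have hTval : T (x₀ - (πK x₀ : X) + (k : X)) = y := by
      simp [map_add, map_sub, hk1, hk2, hx₀]
      exact hx₀
    have hPy : P (T (x₀ - (πK x₀ : X) + (k : X))) = ⟨y, x₀, hx₀⟩ := by
      rw [hTval]
      exact hP ⟨y, x₀, hx₀⟩
    have hπ : πK (x₀ - (πK x₀ : X) + (k : X)) = k := by
      rw [map_add, map_sub, hπK (πK x₀), hπK k]
      abel
    exact Prod.ext hPy hπ
  set E := ContinuousLinearEquiv.ofBijective D hDinj hDsurj with hEdef
  -- the map h
  set h : X → T.range × T.ker := fun x => (P (f x), πK x) with hhdef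
  have hfd : HasStrictFDerivAt f T 0 := (hf.contDiffAt).hasStrictFDerivAt (by simp)
  have hstrict : HasStrictFDerivAt h (E : X →L[ℝ] _) 0 := by
    rw [ContinuousLinearEquiv.coe_ofBijective]
    exact ((P.hasStrictFDerivAt.comp 0 hfd).prodMk (πK.hasStrictFDerivAt))
  set H := hstrict.toOpenPartialHomeomorph h with hHdef
  have hHcoe : (H : X → _) = h := hstrict.toOpenPartialHomeomorph_coe
  have h0W : (0 : X) ∈ H.source := hstrict.mem_toOpenPartialHomeomorph_source
  -- the map u
  have hqzero : ∀ t, f (q t) = 0 := fun t => hQzero ⟨t, rfl⟩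
  have hdq : T.comp (fderiv ℝ q 0) = 0 := by
    have hcomp : fderiv ℝ (f ∘ q) 0 = T.comp (fderiv ℝ q 0) := by
      rw [fderiv_comp 0 ((hf.differentiable (by simp)).differentiableAt)
        ((hq.differentiable (by simp)).differentiableAt), hq0]
    have hconst : (f ∘ q) = fun _ => (0 : Y) := funext fun t => hqzero t
    rw [hconst] at hcomp
    rw [fderiv_const_apply] at hcomp
    exact hcomp.symm.trans (by simp)
  have hdqK : ∀ v, fderiv ℝ q 0 v ∈ T.ker := by
    intro v
    have := congrArg (fun (L : F →L[ℝ] Y) => L v) hdq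
    simpa using this
  set Du : F →L[ℝ] T.ker := πK.comp (fderiv ℝ q 0) with hDudef
  have hDuinj : Function.Injective Du := by
    intro a b hab
    have hz : Du (a - b) = 0 := by rw [map_sub, hab, sub_self]
    have h3 : πK ((fderiv ℝ q 0) (a - b)) = ⟨(fderiv ℝ q 0) (a - b), hdqK _⟩ :=
      hπK ⟨(fderiv ℝ q 0) (a - b), hdqK (a - b)⟩
    have h4 : (⟨(fderiv ℝ q 0) (a - b), hdqK (a - b)⟩ : T.ker) = 0 := by
      rw [← h3]; exact hz
    have h5 : (fderiv ℝ q 0) (a - b) = 0 := congrArg Subtype.val h4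
    exact hqimm 0 (by rw [← sub_eq_zero, ← map_sub]; exact h5)
  have hDusurj : Function.Surjective Du := by
    have hrk : finrank ℝ F = finrank ℝ (T.ker) := hdim.symm
    exact (LinearMap.injective_iff_surjective_of_finrank_eq_finrank hrk).mp hDuinj
  set Eu := ContinuousLinearEquiv.ofBijective Du
    (LinearMap.ker_eq_bot'.mpr fun x hx => hDuinj (by simpa using hx))
    (LinearMap.range_eq_top.mpr hDusurj) with hEudef
  set u : F → T.ker := fun t => πK (q t) with hudef
  have hqd : HasStrictFDerivAt q (fderiv ℝ q 0) 0 := (hq.contDiffAt).hasStrictFDerivAt (by simp)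
  have hustrict : HasStrictFDerivAt u (Eu : F →L[ℝ] _) 0 := by
    rw [ContinuousLinearEquiv.coe_ofBijective]
    exact πK.hasStrictFDerivAt.comp 0 hqd
  set G := hustrict.toOpenPartialHomeomorph u with hGdef
  have hGcoe : (G : F → _) = u := hustrict.toOpenPartialHomeomorph_coe
  have h0G : (0 : F) ∈ G.source := hustrict.mem_toOpenPartialHomeomorph_source
  -- restrict G so that q of its source lies in H.source
  set T0 : Set F := q ⁻¹' H.source with hT0def
  have hT0open : IsOpen T0 := H.open_source.preimage hq.continuous
  have h0T0 : (0 : F) ∈ T0 := by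
    simp only [T0, Set.mem_preimage, hq0]
    exact h0W
  set G' := G.restr T0 with hG'def
  have hG'source : G'.source = G.source ∩ T0 := by
    rw [hG'def, OpenPartialHomeomorph.restr_source, hT0open.interior_eq]
  have h0G' : (0 : F) ∈ G'.source := by rw [hG'source]; exact ⟨h0G, h0T0⟩
  have hG'coe : (G' : F → _) = u := by
    rw [hG'def, OpenPartialHomeomorph.restr_apply, hGcoe]
  have hG'0 : G' 0 = 0 := by
    rw [hG'coe]
    simp only [u, hq0, map_zero]
  have h0V : (0 : T.ker) ∈ G'.target := hG'0 ▸ G'.map_source h0G'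
  -- the neighborhood
  refine ⟨H.source ∩ πK ⁻¹' G'.target, ?_, ?_⟩
  · exact (H.open_source.inter (G'.open_target.preimage πK.continuous)).mem_nhds
      ⟨h0W, by simpa using h0V⟩
  · rintro x ⟨⟨hxW, hxV⟩, hxf⟩
    have hfx : f x = 0 := hxf
    set k : T.ker := πK x with hkdef
    have hkV : k ∈ G'.target := hxV
    set t : F := G'.symm k with htdef
    have htsrc : t ∈ G'.source := G'.map_target hkV
    have htT0 : t ∈ T0 := (hG'source ▸ htsrc).2
    have hut : u t = k := by
      rw [← hG'coe]
      exact G'.right_inv hkV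
    have hqtW : q t ∈ H.source := htT0
    have hhx : h x = (0, k) := by
      simp only [h, hfx, map_zero]
      rfl
    have hhqt : h (q t) = (0, k) := by
      simp only [h, hqzero t, map_zero]
      exact congrArg _ hut
    have : x = q t := H.injOn hxW hqtW (by rw [hHcoe, hhx, hhqt])
    exact ⟨t, this.symm⟩
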